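/- Let n ∈ ℝ³ with ‖n‖ = 1 and let f : ℝ³ → ℝ³ be differentiable with Df(q)(n × q) = n × f(q) for all q ∈ ℝ³. If (q, λ, p_q, p_λ) : [0,T] → (ℝ³)⁴ is a C¹ solution of Hamilton's equations q̇ = -p_λ, λ̇ = -p_q, ṗ_q = -(Df(q))ᵀ λ, ṗ_λ = -f(q) - λ, then the quantity t ↦ ⟨n, q(t) × p_q(t) + λ(t) × p_λ(t)⟩ is constant on [0,T]. -/

import Mathlib

/-!
The quantity is the momentum map of the rotations about `n`, lifted to `(q, λ)` and their
momenta. Along a solution `q̇ × p_q + λ̇ × p_λ = -(p_λ × p_q + p_q × p_λ) = 0` and `λ × λ = 0`,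
while the scalar triple product turns `⟨n, q × (Df(q))ᵀ λ⟩` into `⟨λ, Df(q)(n × q)⟩`, so its time
derivative is `⟨λ, n × f(q) - Df(q)(n × q)⟩`, which vanishes by the equivariance of `f`.
-/

open scoped RealInnerProductSpace

local notation "E3" => EuclideanSpace ℝ (Fin 3)

noncomputable def euclideanCross : E3 →L[ℝ] E3 →L[ℝ] E3 :=
  ((crossProduct.compl₁₂ (WithLp.linearEquiv 2 ℝ (Fin 3 → ℝ)).toLinearMap
    (WithLp.linearEquiv 2 ℝ (Fin 3 → ℝ)).toLinearMap).compr₂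
      (WithLp.linearEquiv 2 ℝ (Fin 3 → ℝ)).symm.toLinearMap).toContinuousBilinearMap

lemma euclideanCross_apply (a b : E3) :
    euclideanCross a b = WithLp.toLp 2 (crossProduct a b) := rfl

lemma euclideanCross_self (a : E3) : euclideanCross a a = 0 := by
  simp [euclideanCross_apply, cross_self]

lemma euclideanCross_swap (a b : E3) : euclideanCross b a = -euclideanCross a b := by
  rw [euclideanCross_apply, euclideanCross_apply, ← cross_anticomm, WithLp.toLp_neg]

lemma inner_euclideanCross_comm (a b c : E3) :
    ⟪a, euclideanCross b c⟫ = ⟪b, euclideanCross c a⟫ := by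
  simp only [euclideanCross_apply, EuclideanSpace.inner_eq_star_dotProduct, star_trivial]
  rw [dotProduct_comm, triple_product_permutation, dotProduct_comm]

lemma inner_euclideanCross_adjoint (A : E3 →L[ℝ] E3) (n q l : E3) :
    ⟪n, euclideanCross q (A.adjoint l)⟫ = ⟪l, A (euclideanCross n q)⟫ := by
  rw [inner_euclideanCross_comm, inner_euclideanCross_comm,
    ContinuousLinearMap.adjoint_inner_left]

noncomputable def angularMomentum (n q l pq pl : E3) : ℝ :=
  ⟪n, euclideanCross q pq + euclideanCross l pl⟫

lemma hasDerivAt_angularMomentum (n : E3) {q l pq pl : ℝ → E3} {q' l' pq' pl' : E3} {t : ℝ}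
    (hq : HasDerivAt q q' t) (hl : HasDerivAt l l' t)
    (hpq : HasDerivAt pq pq' t) (hpl : HasDerivAt pl pl' t) :
    HasDerivAt (fun s ↦ angularMomentum n (q s) (l s) (pq s) (pl s))
      (angularMomentum n (q t) (l t) pq' pl' + angularMomentum n q' l' (pq t) (pl t)) t := by
  have hsum := (euclideanCross.hasDerivAt_of_bilinear (fun _ ↦ hq) (fun _ ↦ hpq)).add
    (euclideanCross.hasDerivAt_of_bilinear (fun _ ↦ hl) (fun _ ↦ hpl))
  refine ((innerSL ℝ n).hasFDerivAt.comp_hasDerivAt t hsum).congr_deriv ?_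
  simp only [angularMomentum, innerSL_apply_apply, inner_add_right]
  ring

/-- With `A = Df(q)` and `fq = f(q)`, the left side is the time derivative of `angularMomentum`
under Hamilton's equations. -/
lemma angularMomentum_hamiltonian_eq_zero (A : E3 →L[ℝ] E3) (n q l pq pl fq : E3)
    (hA : A (euclideanCross n q) = euclideanCross n fq) :
    angularMomentum n q l (-A.adjoint l) (-fq - l) + angularMomentum n (-pl) (-pq) pq pl = 0 := by
  have hadjoint : ⟪n, euclideanCross q (A.adjoint l)⟫ = -⟪n, euclideanCross l fq⟫ := by
    rw [inner_euclideanCross_adjoint, hA, inner_euclideanCross_comm, euclideanCross_swap,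
      inner_neg_right]
  simp only [angularMomentum, map_neg, map_sub, neg_apply, inner_add_right,
    inner_neg_right, inner_sub_right, euclideanCross_self, inner_zero_right, hadjoint,
    euclideanCross_swap pl pq]
  ring

theorem conserved_quantity_rotational_symmetry_hamiltonian_general
    (T : ℝ)
    (nv : EuclideanSpace ℝ (Fin 3))
    (f : EuclideanSpace ℝ (Fin 3) → EuclideanSpace ℝ (Fin 3))
    (hequiv : ∀ q : EuclideanSpace ℝ (Fin 3),
      fderiv ℝ f q (WithLp.toLp 2 (crossProduct nv q)) = crossProduct nv (f q))
    (q l pq pl : ℝ → EuclideanSpace ℝ (Fin 3))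
    (hq : ContDiff ℝ 1 q) (hl : ContDiff ℝ 1 l)
    (hpq : ContDiff ℝ 1 pq) (hpl : ContDiff ℝ 1 pl)
    (hham : ∀ t ∈ Set.Icc (0 : ℝ) T,
      deriv q t = -pl t ∧
      deriv l t = -pq t ∧
      deriv pq t = -(fderiv ℝ f (q t)).adjoint (l t) ∧
      deriv pl t = -f (q t) - l t) :
    ∀ t₁ ∈ Set.Icc (0 : ℝ) T, ∀ t₂ ∈ Set.Icc (0 : ℝ) T,
      @inner ℝ (EuclideanSpace ℝ (Fin 3)) _ nv
          (WithLp.toLp 2 (crossProduct (q t₁) (pq t₁) + crossProduct (l t₁) (pl t₁)))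
        = @inner ℝ (EuclideanSpace ℝ (Fin 3)) _ nv
          (WithLp.toLp 2 (crossProduct (q t₂) (pq t₂) + crossProduct (l t₂) (pl t₂))) := by
  let g t := angularMomentum nv (q t) (l t) (pq t) (pl t)
  have hg t : HasDerivAt g _ t := hasDerivAt_angularMomentum nv
    (hq.differentiable one_ne_zero t).hasDerivAt (hl.differentiable one_ne_zero t).hasDerivAt
    (hpq.differentiable one_ne_zero t).hasDerivAt (hpl.differentiable one_ne_zero t).hasDerivAt
  have hg_zero : ∀ t ∈ Set.Icc 0 T, HasDerivAt g 0 t := by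
    intro t ht
    obtain ⟨hq', hl', hpq', hpl'⟩ := hham t ht
    convert hg t using 1
    rw [hq', hl', hpq', hpl', angularMomentum_hamiltonian_eq_zero _ _ _ _ _ _ _
      (congrArg (WithLp.toLp 2) (hequiv (q t)))]
  have hconst := constant_of_has_deriv_right_zero
    (continuous_iff_continuousAt.2 fun t ↦ (hg t).continuousAt).continuousOn
    fun t ht ↦ (hg_zero t (Set.Ico_subset_Icc_self ht)).hasDerivWithinAt
  intro t₁ ht₁ t₂ ht₂
  exact (hconst t₁ ht₁).trans (hconst t₂ ht₂).symm

/-- For `f` infinitesimally equivariant under rotations about a unit vector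
`n`, the quantity `⟨n, q × p_q + λ × p_λ⟩` is conserved along C¹ solutions of Hamilton's
equations `q̇ = -p_λ`, `λ̇ = -p_q`, `ṗ_q = -(Df(q))ᵀ λ`, `ṗ_λ = -f(q) - λ`. -/
theorem conserved_quantity_rotational_symmetry_hamiltonian
    (T : ℝ) (hT : 0 < T)
    (nv : EuclideanSpace ℝ (Fin 3)) (hn : ‖nv‖ = 1)
    (f : EuclideanSpace ℝ (Fin 3) → EuclideanSpace ℝ (Fin 3)) (hf : Differentiable ℝ f)
    (hequiv : ∀ q : EuclideanSpace ℝ (Fin 3),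
      fderiv ℝ f q (WithLp.toLp 2 (crossProduct nv q)) = crossProduct nv (f q))
    (q l pq pl : ℝ → EuclideanSpace ℝ (Fin 3))
    (hq : ContDiff ℝ 1 q) (hl : ContDiff ℝ 1 l)
    (hpq : ContDiff ℝ 1 pq) (hpl : ContDiff ℝ 1 pl)
    (hham : ∀ t ∈ Set.Icc (0 : ℝ) T,
      deriv q t = -pl t ∧
      deriv l t = -pq t ∧
      deriv pq t = -(fderiv ℝ f (q t)).adjoint (l t) ∧
      deriv pl t = -f (q t) - l t) :
    ∀ t₁ ∈ Set.Icc (0 : ℝ) T, ∀ t₂ ∈ Set.Icc (0 : ℝ) T,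
      @inner ℝ (EuclideanSpace ℝ (Fin 3)) _ nv
          (WithLp.toLp 2 (crossProduct (q t₁) (pq t₁) + crossProduct (l t₁) (pl t₁)))
        = @inner ℝ (EuclideanSpace ℝ (Fin 3)) _ nv
          (WithLp.toLp 2 (crossProduct (q t₂) (pq t₂) + crossProduct (l t₂) (pl t₂))) :=
  conserved_quantity_rotational_symmetry_hamiltonian_general T nv f hequiv q l pq pl hq hl hpq hpl
    hham
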